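/- Let S(x,q) be a generating function on ℝ^m × (ℝ^n)^* and, for each k, let S^{(k)}(x,q) = Σ_{i≤k} S_i^{a_1…a_i}(x) q_{a_1}⋯q_{a_i} denote its truncation to degree k in q. Then for every m ≥ 1 the thick-morphism pull-backs Φ_{S^{(m+1)}}^* and Φ_{S^{(m)}}^* coincide up to order m, and their components of order m+1 differ by [Φ_{S^{(m+1)}}^*(g)]_{m+1} − [Φ_{S^{(m)}}^*(g)]_{m+1} = S_{m+1}^{a_1…a_{m+1}}(x) g*_{a_1}(x) ⋯ g*_{a_{m+1}}(x), where g*_a(x) = (∂g/∂y^a)(S_1(x)). -/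

import Mathlib

open scoped BigOperators

namespace ThickMorphism

/-- Real-valued functions on `ℝ^n` (the ambient space of `C^∞(ℝ^n)`). -/
abbrev Fn (n : ℕ) : Type := (Fin n → ℝ) → ℝ

/-- `ℝ^n`-valued functions on `ℝ^m`. -/
abbrev VFn (m n : ℕ) : Type := (Fin m → ℝ) → Fin n → ℝ

/-- `f` is a smooth (`C^∞`) function on `ℝ^n`. -/
def Sm {n : ℕ} (f : Fn n) : Prop := ContDiff ℝ (⊤ : ℕ∞) f

/-- `f` is a smooth (`C^∞`) map from `ℝ^m` to `ℝ^n`. -/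
def SmV {m n : ℕ} (f : VFn m n) : Prop := ContDiff ℝ (⊤ : ℕ∞) f

/-- The partial derivative `∂_b g`. -/
noncomputable def pd {n : ℕ} (b : Fin n) (g : Fn n) : Fn n :=
  fun y => fderiv ℝ g y (Pi.single b 1)

/-- The `a`-th coordinate function `y^a` on `ℝ^n`. -/
def coordFn {n : ℕ} (a : Fin n) : Fn n := fun y => y a

/-- Ordered tuples of `j` positive parts summing to `k` (parts coded in `Fin (k+1)`). -/
def parts (j k : ℕ) : Finset (Fin j → Fin (k + 1)) :=
  Finset.univ.filter fun t => (∑ i, (t i : ℕ)) = k ∧ ∀ i, 0 < (t i : ℕ)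

/-- Order-`k` component of the Taylor expansion (at `Y 0`) of `h ∘ Y`,
where `Y r` is the order-`r` component of a formal map with values in `ℝ^n`:
`Σ_{j} Σ_{r_1+⋯+r_j = k, r_i ≥ 1} (1/j!) ∂^j h (Y 0 x) (Y_{r_1}(x),…,Y_{r_j}(x))`. -/
noncomputable def taylorComp {m n : ℕ} (h : Fn n) (Y : ℕ → VFn m n) (k : ℕ) : Fn m :=
  fun x => ∑ j ∈ Finset.range (k + 1), ∑ t ∈ parts j k,
    ((Nat.factorial j : ℝ))⁻¹ * iteratedFDeriv ℝ j h (Y 0 x) (fun i => Y (t i : ℕ) x)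

/-- A formal functional from `C^∞(ℝ^n)` to `C^∞(ℝ^m)`: a sequence of symmetric
`k`-linear maps `B k` (the polarised forms), preserving smoothness; the order-`k`
component of the functional is the diagonal restriction `g ↦ B k (g,…,g)`. -/
structure FormalFunctional (n m : ℕ) where
  B : (k : ℕ) → MultilinearMap ℝ (fun _ : Fin k => Fn n) (Fn m)
  symm : ∀ (k : ℕ) (σ : Equiv.Perm (Fin k)) (v : Fin k → Fn n), B k (v ∘ σ) = B k v
  smooth : ∀ (k : ℕ) (v : Fin k → Fn n), (∀ i, Sm (v i)) → Sm (B k v)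

/-- The order-`k` component `L_k(g)` of a formal functional. -/
def FormalFunctional.ord {n m : ℕ} (L : FormalFunctional n m) (k : ℕ) (g : Fn n) : Fn m :=
  L.B k (fun _ => g)

/-- A formal map over `C^∞(ℝ^n)` with values in `ℝ^n`-valued functions on `ℝ^m`:
a sequence of symmetric `r`-linear maps `K r`; the order-`r` component at `g`
is the diagonal restriction. -/
structure FormalMap (n m : ℕ) where
  K : (r : ℕ) → MultilinearMap ℝ (fun _ : Fin r => Fn n) (VFn m n)
  symm : ∀ (r : ℕ) (σ : Equiv.Perm (Fin r)) (v : Fin r → Fn n), K r (v ∘ σ) = K r v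
  smooth : ∀ (r : ℕ) (v : Fin r → Fn n), (∀ i, Sm (v i)) → SmV (K r v)

/-- The order-`r` component `K_r(g)` of a formal map. -/
def FormalMap.ord {n m : ℕ} (K : FormalMap n m) (r : ℕ) (g : Fn n) : VFn m n :=
  K.K r (fun _ => g)

/-- The support map `K₀` of a formal map. -/
def FormalMap.supp {n m : ℕ} (K : FormalMap n m) : VFn m n :=
  K.K 0 (fun i => i.elim0)

/-- `L` is a non-linear homomorphism with associated formal map `K`: for all smooth
`g, h` and all `k`, the order-`k`-in-`g` component of the differential of `L` at `g`
in direction `h`, namely `(k+1)·B_{k+1}(h,g,…,g)`, equals the order-`k` component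
of the formal (Taylor) composition `h(K(g))`. -/
def IsNonlinearHomWith {n m : ℕ} (L : FormalFunctional n m) (K : FormalMap n m) : Prop :=
  ∀ (g h : Fn n), Sm g → Sm h → ∀ k : ℕ,
    ((k : ℝ) + 1) • L.B (k + 1) (Fin.cons h (fun _ => g)) =
      taylorComp h (fun r => K.ord r g) k

/-- `L` is a non-linear homomorphism. -/
def IsNonlinearHom {n m : ℕ} (L : FormalFunctional n m) : Prop :=
  ∃ K : FormalMap n m, IsNonlinearHomWith L K

/-- A generating function `S(x,q) = Σ_k S_k^{a_1…a_k}(x) q_{a_1}⋯q_{a_k}` of a thick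
morphism `ℝ^m ⇛ ℝ^n`: smooth symmetric tensors `S k x : (Fin k → Fin n) → ℝ`. -/
structure GenFn (m n : ℕ) where
  S : (k : ℕ) → (Fin m → ℝ) → (Fin k → Fin n) → ℝ
  symm : ∀ (k : ℕ) (σ : Equiv.Perm (Fin k)) (x : Fin m → ℝ) (a : Fin k → Fin n),
    S k x (a ∘ σ) = S k x a
  smooth : ∀ (k : ℕ) (a : Fin k → Fin n), Sm (fun x => S k x a)

/-- The first-order coefficient `S_1` of a generating function, as a map `ℝ^m → ℝ^n`. -/
def sOne {m n : ℕ} (S : GenFn m n) : VFn m n := fun x a => S.S 1 x (fun _ => a)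

/-- Order-`t`-in-`g` component (`t ≥ 1`) of `q_b = (∂_b g)(y(x,g))`, the formal map `y`
having components `Y`: it is the Taylor-composition component of order `t-1`. -/
noncomputable def qComp {m n : ℕ} (g : Fn n) (Y : ℕ → VFn m n) (b : Fin n) (t : ℕ) : Fn m :=
  taylorComp (pd b g) Y (t - 1)

/-- Order-`N`-in-`g` component of `∂S(x,q)/∂q_a` evaluated at `q_b = (∂_b g)(y(x,g))`,
where `y` has components `Y`. -/
noncomputable def dSComp {m n : ℕ} (S : GenFn m n) (g : Fn n) (Y : ℕ → VFn m n) (N : ℕ) :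
    VFn m n :=
  fun x a => ∑ j ∈ Finset.range (N + 1), ∑ b : Fin j → Fin n, ∑ t ∈ parts j N,
    ((j : ℝ) + 1) * S.S (j + 1) x (Fin.cons a b) * ∏ i, qComp g Y (b i) (t i : ℕ) x

/-- Auxiliary recursion: `thickYAux S g k r` is the order-`r` component `y_r(x,g)` of the
formal map of the thick morphism `Φ_S` for `r ≤ k` (and `0` for `r > k`). -/
noncomputable def thickYAux {m n : ℕ} (S : GenFn m n) (g : Fn n) : ℕ → ℕ → VFn m n
  | 0 => fun r => if r = 0 then (fun x a => S.S 1 x (fun _ => a)) else 0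
  | k + 1 => fun r =>
      if r = k + 1 then dSComp S g (thickYAux S g k) (k + 1) else thickYAux S g k r

/-- The order-`k` component `y_k(x,g)` of the formal map of the thick morphism `Φ_S`:
`y_0 = S_1`, and `y_{k+1}` is the order-`(k+1)`-in-`g` component of `∂S/∂q_a` at
`q = (∂g)(y_{≤k}(x,g))`. -/
noncomputable def thickY {m n : ℕ} (S : GenFn m n) (g : Fn n) (k : ℕ) : VFn m n :=
  thickYAux S g k k

/-- Order-`k`-in-`g` component of `S(x,q)` evaluated at `q = (∂g)(y(x,g))`. -/
noncomputable def SqComp {m n : ℕ} (S : GenFn m n) (g : Fn n) (k : ℕ) : Fn m :=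
  fun x => ∑ j ∈ Finset.range (k + 1), ∑ b : Fin j → Fin n, ∑ t ∈ parts j k,
    S.S j x b * ∏ i, qComp g (thickY S g) (b i) (t i : ℕ) x

/-- Order-`k`-in-`g` component of `y^a q_a` at `y = y(x,g)`, `q = (∂g)(y(x,g))`. -/
noncomputable def yqComp {m n : ℕ} (S : GenFn m n) (g : Fn n) (k : ℕ) : Fn m :=
  fun x => ∑ a : Fin n, ∑ t ∈ Finset.Icc 1 k,
    thickY S g (k - t) x a * qComp g (thickY S g) a t x

/-- The order-`k`-in-`g` component of the thick-morphism pull-back `Φ_S^*(g)`, i.e. of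
`g(y) + S(x,q) − y^a q_a` at `y = y(x,g)`, `q = (∂g)(y(x,g))`, all compositions being
expanded by Taylor series at `y_0 = S_1(x)`. -/
noncomputable def thickPull {m n : ℕ} (S : GenFn m n) (g : Fn n) (k : ℕ) : Fn m :=
  fun x =>
    (if k = 0 then 0 else taylorComp g (thickY S g) (k - 1) x)
      + SqComp S g k x - yqComp S g k x

/-- The coordinate functions are smooth. -/
lemma coordFn_smooth {n : ℕ} (a : Fin n) : Sm (coordFn a) :=
  (ContinuousLinearMap.proj a : (Fin n → ℝ) →L[ℝ] ℝ).contDiff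

/-- The generating function `S_L` associated with a formal functional `L`:
`S_k^{a_1…a_k}(x) = B_k(y^{a_1},…,y^{a_k})(x)`, the polarised forms of `L`
evaluated on the coordinate functions of `ℝ^n`. -/
noncomputable def assocGen {n m : ℕ} (L : FormalFunctional n m) : GenFn m n where
  S := fun k x a => L.B k (fun i => coordFn (a i)) x
  symm := by
    intro k σ x a
    have h := L.symm k σ (fun i => coordFn (a i))
    exact congrFun h x
  smooth := fun k a => L.smooth k _ (fun i => coordFn_smooth (a i))

/-- Truncation of a generating function to degree `≤ k` in `q`. -/
noncomputable def truncGen {m n : ℕ} (S : GenFn m n) (k : ℕ) : GenFn m n where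
  S := fun i x a => if i ≤ k then S.S i x a else 0
  symm := by
    intro i σ x a
    by_cases h : i ≤ k <;> simp [h, S.symm]
  smooth := by
    intro i a
    by_cases h : i ≤ k
    · simpa [Sm, h] using S.smooth i a
    · simpa [Sm, h] using (contDiff_const : ContDiff ℝ (⊤ : ℕ∞) fun _ : Fin m → ℝ => (0 : ℝ))

/-!
Truncating `S` above degree `p` changes neither `S_j` for `j ≤ p` nor, therefore, `y_r` for
`r < p` (since `y_r` only involves `S_1, …, S_{r+1}`) or the components of `Φ_S^*(g)` of order
`≤ p`. At order `p + 1` the two pull-backs differ by the new term `S_{p+1}(g*, …, g*)` and by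
terms linear in `δy = y_p − y_p'`; the latter cancel because `g(y) + S(x, q) − y^a q_a` is
stationary in `y` and `q`: the linear term `δy^a ∂_a g(S_1)` of `g(y)` cancels the `q_a` part
of `y^a q_a`, and the `S_1^a δq_a` part of `S(x, q)` cancels its `y_0^a` part, as `y_0 = S_1`.
-/

open Finset

section Parts

lemma mem_parts {j k : ℕ} {t : Fin j → Fin (k + 1)} :
    t ∈ parts j k ↔ (∑ i, (t i : ℕ)) = k ∧ ∀ i, 0 < (t i : ℕ) := by
  simp [parts]

lemma lt_of_mem_parts {j k : ℕ} (hj : j ≠ 1) {t : Fin j → Fin (k + 1)} (ht : t ∈ parts j k)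
    (i : Fin j) : (t i : ℕ) < k := by
  obtain ⟨hsum, hpos⟩ := mem_parts.mp ht
  obtain ⟨i', hi'⟩ : ∃ i', i' ≠ i :=
    Fintype.exists_ne_of_one_lt_card (by have := i.pos; simp only [Fintype.card_fin]; omega) i
  have := single_lt_sum (f := fun i => (t i : ℕ)) hi' (mem_univ i) (mem_univ i') (hpos i')
    fun _ _ _ => Nat.zero_le _
  omega

lemma parts_one {k : ℕ} (hk : 1 ≤ k) : parts 1 k = {fun _ => Fin.last k} := by
  ext t
  simp only [mem_parts, Fin.sum_univ_one, mem_singleton, Fin.forall_fin_one, funext_iff]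
  exact ⟨fun h => Fin.ext h.1, fun h => ⟨by rw [h]; rfl, by rw [h]; exact hk⟩⟩

lemma parts_self (k : ℕ) : parts (k + 1) (k + 1) = {fun _ => 1} := by
  ext t
  simp only [mem_parts, mem_singleton, funext_iff, Fin.ext_iff, Fin.val_one]
  constructor
  · rintro ⟨hsum, hpos⟩
    have hone : ∑ _i : Fin (k + 1), 1 = ∑ i, (t i : ℕ) := by simp [hsum]
    exact fun i => ((sum_eq_sum_iff_of_le fun i _ => hpos i).mp hone i (mem_univ i)).symm
  · intro h
    simp [h]

end Parts

section Taylor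

variable {m n : ℕ}

lemma taylorComp_congr (h : Fn n) {Y Y' : ℕ → VFn m n} {k : ℕ} {x : Fin m → ℝ}
    (H : ∀ r ≤ k, Y r x = Y' r x) : taylorComp h Y k x = taylorComp h Y' k x := by
  refine sum_congr rfl fun j _ => sum_congr rfl fun t _ => ?_
  rw [H 0 k.zero_le]
  congr 2
  exact funext fun i => H _ (Fin.is_le _)

lemma taylorComp_zero (h : Fn n) (Y : ℕ → VFn m n) (x : Fin m → ℝ) :
    taylorComp h Y 0 x = h (Y 0 x) := by
  simp [taylorComp, parts]

/-- Only the linear term of the Taylor expansion sees the top component `Y k`. -/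
lemma taylorComp_sub_of_lt (h : Fn n) {Y Y' : ℕ → VFn m n} {k : ℕ} (hk : 1 ≤ k)
    {x : Fin m → ℝ} (H : ∀ r < k, Y r x = Y' r x) :
    taylorComp h Y k x - taylorComp h Y' k x = fderiv ℝ h (Y 0 x) (Y k x - Y' k x) := by
  rw [taylorComp, taylorComp, ← sum_sub_distrib, sum_eq_single_of_mem 1 (by simp; omega)
    fun j _ hj => sub_eq_zero.mpr <| sum_congr rfl fun t ht => by
      rw [H 0 hk, funext fun i => H _ (lt_of_mem_parts hj ht i)]]
  simp [parts_one hk, H 0 hk, map_sub]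

lemma fderiv_apply_eq_sum_pd (h : Fn n) (y v : Fin n → ℝ) :
    fderiv ℝ h y v = ∑ a, v a * pd a h y := by
  conv_lhs => rw [pi_eq_sum_univ' v]
  simp [pd]

lemma qComp_one (g : Fn n) (Y : ℕ → VFn m n) (b : Fin n) (x : Fin m → ℝ) :
    qComp g Y b 1 x = pd b g (Y 0 x) :=
  taylorComp_zero _ _ _

lemma qComp_congr (g : Fn n) {Y Y' : ℕ → VFn m n} (b : Fin n) {t : ℕ} {x : Fin m → ℝ}
    (ht : 0 < t) (H : ∀ r < t, Y r x = Y' r x) : qComp g Y b t x = qComp g Y' b t x :=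
  taylorComp_congr _ fun r hr => H r (by omega)

lemma qComp_succ_sub (g : Fn n) {Y Y' : ℕ → VFn m n} (b : Fin n) {k : ℕ} (hk : 1 ≤ k)
    {x : Fin m → ℝ} (H : ∀ r < k, Y r x = Y' r x) :
    qComp g Y b (k + 1) x - qComp g Y' b (k + 1) x
      = fderiv ℝ (pd b g) (Y 0 x) (Y k x - Y' k x) :=
  taylorComp_sub_of_lt _ hk H

lemma prod_qComp_congr (g : Fn n) {Y Y' : ℕ → VFn m n} {j N K : ℕ} (b : Fin j → Fin n)
    {t : Fin j → Fin (N + 1)} (ht : t ∈ parts j N) (hK : ∀ i, (t i : ℕ) ≤ K) {x : Fin m → ℝ}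
    (H : ∀ r < K, Y r x = Y' r x) :
    ∏ i, qComp g Y (b i) (t i) x = ∏ i, qComp g Y' (b i) (t i) x :=
  prod_congr rfl fun i _ =>
    qComp_congr g (b i) ((mem_parts.mp ht).2 i) fun r hr => H r (by have := hK i; omega)

lemma sum_parts_self_mul_prod_qComp (g : Fn n) (Y : ℕ → VFn m n) (k : ℕ)
    (c : (Fin (k + 1) → Fin n) → ℝ) (x : Fin m → ℝ) :
    ∑ b, ∑ t ∈ parts (k + 1) (k + 1), c b * ∏ i, qComp g Y (b i) (t i) x
      = ∑ b, c b * ∏ i, pd (b i) g (Y 0 x) := by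
  simp only [parts_self, sum_singleton, Fin.val_one, qComp_one]

lemma sum_parts_one_mul_prod_qComp (g : Fn n) (Y : ℕ → VFn m n) {k : ℕ} (hk : 1 ≤ k)
    (c : (Fin 1 → Fin n) → ℝ) (x : Fin m → ℝ) :
    ∑ b, ∑ t ∈ parts 1 k, c b * ∏ i, qComp g Y (b i) (t i) x
      = ∑ a, c (fun _ => a) * qComp g Y a k x := by
  simp only [parts_one hk, sum_singleton, Fin.prod_univ_one, Fin.val_last]
  exact ((Equiv.funUnique (Fin 1) (Fin n)).symm.sum_comp _).symm

end Taylor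

section Pullback

variable {m n : ℕ}

lemma dSComp_congr {S S' : GenFn m n} (g : Fn n) {Y Y' : ℕ → VFn m n} (N : ℕ)
    (hS : ∀ j ≤ N + 1, S.S j = S'.S j) (hY : ∀ r < N, Y r = Y' r) :
    dSComp S g Y N = dSComp S' g Y' N := by
  funext x a
  refine sum_congr rfl fun j hj => sum_congr rfl fun b _ => sum_congr rfl fun t ht => ?_
  rw [hS (j + 1) (by simp at hj; omega),
    prod_qComp_congr g b ht (fun i => Fin.is_le _) fun r hr => congrFun (hY r hr) x]

lemma thickYAux_eq_thickY (S : GenFn m n) (g : Fn n) {k r : ℕ} (hr : r ≤ k) :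
    thickYAux S g k r = thickY S g r := by
  induction k with
  | zero => obtain rfl := Nat.le_zero.mp hr; rfl
  | succ k ih =>
    rcases hr.lt_or_eq with hr | rfl
    · simp only [thickYAux, if_neg hr.ne, ih (by omega : r ≤ k)]
    · rfl

lemma thickY_zero (S : GenFn m n) (g : Fn n) : thickY S g 0 = sOne S := rfl

lemma thickY_succ (S : GenFn m n) (g : Fn n) (r : ℕ) :
    thickY S g (r + 1) = dSComp S g (thickY S g) (r + 1) := by
  simp only [thickY, thickYAux, if_true]
  exact dSComp_congr g _ (fun _ _ => rfl) fun s hs => thickYAux_eq_thickY S g (by omega)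

lemma thickY_congr {S S' : GenFn m n} (g : Fn n) {K : ℕ} (hS : ∀ i ≤ K, S.S i = S'.S i)
    {r : ℕ} (hr : r < K) : thickY S g r = thickY S' g r := by
  induction r using Nat.strong_induction_on with
  | _ r ih =>
    cases r with
    | zero => rw [thickY_zero, thickY_zero]; unfold sOne; rw [hS 1 hr]
    | succ r =>
      rw [thickY_succ, thickY_succ]
      exact dSComp_congr g _ (fun j hj => hS j (by omega)) fun s hs => ih s (by omega) (by omega)

lemma SqComp_congr {S S' : GenFn m n} (g : Fn n) {k : ℕ} (hS : ∀ j ≤ k, S.S j = S'.S j) :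
    SqComp S g k = SqComp S' g k := by
  funext x
  refine sum_congr rfl fun j hj => sum_congr rfl fun b _ => sum_congr rfl fun t ht => ?_
  rw [hS j (by simp at hj; omega), prod_qComp_congr g b ht (fun i => Fin.is_le _)
    fun r hr => by rw [thickY_congr g hS hr]]

lemma yqComp_congr {S S' : GenFn m n} (g : Fn n) {k : ℕ} (hS : ∀ j ≤ k, S.S j = S'.S j) :
    yqComp S g k = yqComp S' g k := by
  funext x
  refine sum_congr rfl fun a _ => sum_congr rfl fun t ht => ?_
  obtain ⟨ht1, htk⟩ := mem_Icc.mp ht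
  rw [thickY_congr g hS (by omega : k - t < k),
    qComp_congr g a ht1 fun r hr => by rw [thickY_congr g hS (by omega : r < k)]]

lemma thickPull_congr {S S' : GenFn m n} (g : Fn n) {k : ℕ} (hS : ∀ j ≤ k, S.S j = S'.S j) :
    thickPull S g k = thickPull S' g k := by
  funext x
  rw [thickPull, thickPull, SqComp_congr g hS, yqComp_congr g hS]
  split_ifs
  · rfl
  · rw [taylorComp_congr g fun r hr => by rw [thickY_congr g hS (by omega : r < k)]]

end Pullback

section TopOrder

variable {m n : ℕ} {S S' : GenFn m n} {p : ℕ} (g : Fn n) (x : Fin m → ℝ)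

lemma SqComp_succ_sub (hp : 1 ≤ p) (hS : ∀ j ≤ p, S.S j = S'.S j) :
    SqComp S g (p + 1) x - SqComp S' g (p + 1) x
      = ∑ b : Fin (p + 1) → Fin n,
          (S.S (p + 1) x b - S'.S (p + 1) x b) * ∏ i, pd (b i) g (sOne S x)
        + ∑ a, sOne S x a * fderiv ℝ (pd a g) (sOne S x) (thickY S g p x - thickY S' g p x) := by
  have hY : ∀ r < p, thickY S g r x = thickY S' g r x := fun r hr => by
    rw [thickY_congr g hS hr]
  have hY0 : thickY S' g 0 x = sOne S x := by rw [← hY 0 hp, thickY_zero]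
  rw [SqComp, SqComp, ← sum_sub_distrib, sum_eq_add_of_mem (p + 1) 1 (by simp) (by simp)
    (by omega) fun j hj ⟨_, hj1⟩ => sub_eq_zero.mpr <| sum_congr rfl fun b _ =>
      sum_congr rfl fun t ht => by
        rw [hS j (by simp at hj; omega), prod_qComp_congr g b ht
          (fun i => Nat.le_of_lt_succ (lt_of_mem_parts hj1 ht i)) fun r hr => hY r hr]]
  congr 1
  · rw [sum_parts_self_mul_prod_qComp, sum_parts_self_mul_prod_qComp, hY0, thickY_zero,
      ← sum_sub_distrib]
    simp only [sub_mul]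
  · rw [sum_parts_one_mul_prod_qComp g _ (by omega), sum_parts_one_mul_prod_qComp g _ (by omega),
      ← sum_sub_distrib, ← hS 1 hp]
    refine sum_congr rfl fun a _ => ?_
    rw [← mul_sub, qComp_succ_sub g a hp hY, thickY_zero]
    rfl

lemma yqComp_succ_sub (hp : 1 ≤ p) (hS : ∀ j ≤ p, S.S j = S'.S j) :
    yqComp S g (p + 1) x - yqComp S' g (p + 1) x
      = ∑ a, ((thickY S g p x - thickY S' g p x) a * pd a g (sOne S x)
        + sOne S x a * fderiv ℝ (pd a g) (sOne S x) (thickY S g p x - thickY S' g p x)) := by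
  have hY : ∀ r < p, thickY S g r x = thickY S' g r x := fun r hr => by
    rw [thickY_congr g hS hr]
  have hY0 : thickY S' g 0 x = sOne S x := by rw [← hY 0 hp, thickY_zero]
  rw [yqComp, yqComp, ← sum_sub_distrib]
  refine sum_congr rfl fun a _ => ?_
  rw [← sum_sub_distrib, sum_eq_add_of_mem 1 (p + 1) (by simp) (by simp) (by omega)
    fun t ht _ => sub_eq_zero.mpr (by
      obtain ⟨ht1, htp⟩ := mem_Icc.mp ht
      rw [hY (p + 1 - t) (by omega), qComp_congr g a ht1 fun r hr => hY r (by omega)])]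
  congr 1
  · simp only [Nat.add_sub_cancel, qComp_one, hY0, thickY_zero, Pi.sub_apply, sub_mul]
  · rw [Nat.sub_self, hY0, thickY_zero, ← mul_sub, qComp_succ_sub g a hp hY, thickY_zero]

theorem thickPull_succ_sub (hp : 1 ≤ p) (hS : ∀ j ≤ p, S.S j = S'.S j) :
    thickPull S g (p + 1) x - thickPull S' g (p + 1) x
      = ∑ b : Fin (p + 1) → Fin n,
          (S.S (p + 1) x b - S'.S (p + 1) x b) * ∏ i, pd (b i) g (sOne S x) := by
  have hg : taylorComp g (thickY S g) p x - taylorComp g (thickY S' g) p x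
      = ∑ a, (thickY S g p x - thickY S' g p x) a * pd a g (sOne S x) := by
    rw [taylorComp_sub_of_lt g hp fun r hr => by rw [thickY_congr g hS hr], thickY_zero,
      fderiv_apply_eq_sum_pd]
  have hsq := SqComp_succ_sub g x hp hS
  have hyq := yqComp_succ_sub g x hp hS
  rw [sum_add_distrib] at hyq
  simp only [thickPull, if_neg p.succ_ne_zero, Nat.add_sub_cancel]
  linear_combination hg + hsq - hyq

end TopOrder

lemma truncGen_S_of_le {m n : ℕ} (S : GenFn m n) {i k : ℕ} (h : i ≤ k) :
    (truncGen S k).S i = S.S i := by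
  funext x a
  simp [truncGen, h]

lemma truncGen_S_of_lt {m n : ℕ} (S : GenFn m n) {i k : ℕ} (h : k < i) :
    (truncGen S k).S i = 0 := by
  funext x a
  simp [truncGen, h]

theorem truncation_approximation_general {m n : ℕ} (S : GenFn m n) (p : ℕ) (hp : 1 ≤ p)
    (g : Fn n) :
    (∀ r ≤ p, thickPull (truncGen S (p + 1)) g r = thickPull (truncGen S p) g r)
    ∧ ∀ x : Fin m → ℝ,
        thickPull (truncGen S (p + 1)) g (p + 1) x
          - thickPull (truncGen S p) g (p + 1) x
        = ∑ a : Fin (p + 1) → Fin n, S.S (p + 1) x a * ∏ i, pd (a i) g (sOne S x) := by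
  have hS : ∀ j ≤ p, (truncGen S (p + 1)).S j = (truncGen S p).S j := fun j hj => by
    rw [truncGen_S_of_le S hj, truncGen_S_of_le S (by omega)]
  refine ⟨fun r hr => thickPull_congr g fun j hj => hS j (hj.trans hr), fun x => ?_⟩
  have hS1 : sOne (truncGen S (p + 1)) = sOne S := by
    unfold sOne
    rw [truncGen_S_of_le S (by omega)]
  rw [thickPull_succ_sub g x hp hS, hS1, truncGen_S_of_le S le_rfl,
    truncGen_S_of_lt S (Nat.lt_succ_self p)]
  simp only [Pi.zero_apply, sub_zero]

/-- Let `S^{(k)} = truncGen S k` denote the truncation of `S` to degree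
`k` in `q`. For every `p ≥ 1` the pull-backs `Φ_{S^{(p+1)}}^*` and `Φ_{S^{(p)}}^*`
coincide up to order `p`, and their components of order `p+1` differ by
`S_{p+1}^{a_1…a_{p+1}}(x) g*_{a_1}(x) ⋯ g*_{a_{p+1}}(x)`, where `g*_a(x) = (∂_a g)(S_1(x))`. -/
theorem truncation_approximation {m n : ℕ} (S : GenFn m n) (p : ℕ) (hp : 1 ≤ p)
    (g : Fn n) (hg : Sm g) :
    (∀ r ≤ p, thickPull (truncGen S (p + 1)) g r = thickPull (truncGen S p) g r)
    ∧ ∀ x : Fin m → ℝ,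
        thickPull (truncGen S (p + 1)) g (p + 1) x
          - thickPull (truncGen S p) g (p + 1) x
        = ∑ a : Fin (p + 1) → Fin n, S.S (p + 1) x a * ∏ i, pd (a i) g (sOne S x) :=
  truncation_approximation_general S p hp g

end ThickMorphism
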